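/- arXiv:1508.04230 — 4 statements merged into one kernel-verified Lean document; each statement's English description precedes it below -/
import Mathlib

section
/- Let σ denote the 2-dimensional surface (Hausdorff) measure on the unit sphere S² ⊂ ℝ³. Let f : ℝ × S² → ℝ be continuous and nonnegative, and let m₀ : ℝ → ℝ and m : ℝ → ℝ³ be differentiable functions satisfying, for every u ∈ ℝ, m₀'(u) = -(1/(4π)) ∫_{S²} f(u,x) dσ(x) and m'(u) = -(1/(4π)) ∫_{S²} f(u,x) x dσ(x). Then the function u ↦ m₀(u) - ‖m(u)‖ is nonincreasing on ℝ; in particular, if m₀(u₀) ≥ ‖m(u₀)‖ for some u₀, then m₀(u) ≥ ‖m(u)‖ for all u ≤ u₀. -/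
open MeasureTheory Real
open scoped RealInnerProductSpace

/-- **Monotonicity of the Bondi energy-momentum difference.**
Under the Bondi energy-momentum loss formulas, `u ↦ m₀ u - ‖m u‖` is nonincreasing;
in particular if `m₀ u₀ ≥ ‖m u₀‖` for some `u₀` then `m₀ u ≥ ‖m u‖` for all `u ≤ u₀`. -/
theorem bondi_energy_momentum_antitone
    (f : ℝ × (Metric.sphere (0 : EuclideanSpace ℝ (Fin 3)) 1) → ℝ)
    (hf_cont : Continuous f)
    (hf_nonneg : ∀ p, 0 ≤ f p)
    (m₀ : ℝ → ℝ) (m : ℝ → EuclideanSpace ℝ (Fin 3))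
    (hm₀ : ∀ u : ℝ, HasDerivAt m₀
      (-(1 / (4 * π)) * ∫ x : Metric.sphere (0 : EuclideanSpace ℝ (Fin 3)) 1,
        f (u, x) ∂μH[2]) u)
    (hm : ∀ u : ℝ, HasDerivAt m
      ((-(1 / (4 * π))) • ∫ x : Metric.sphere (0 : EuclideanSpace ℝ (Fin 3)) 1,
        f (u, x) • (x : EuclideanSpace ℝ (Fin 3)) ∂μH[2]) u) :
    Antitone (fun u : ℝ => m₀ u - ‖m u‖) ∧
    ∀ u₀ u : ℝ, u ≤ u₀ → ‖m u₀‖ ≤ m₀ u₀ → ‖m u‖ ≤ m₀ u := by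
  have hπ : (0:ℝ) < 4 * π := by positivity
  -- pointwise bound on the norms of the derivatives
  have hbound : ∀ u : ℝ,
      ‖(-(1 / (4 * π))) • ∫ x : Metric.sphere (0 : EuclideanSpace ℝ (Fin 3)) 1,
          f (u, x) • (x : EuclideanSpace ℝ (Fin 3)) ∂μH[2]‖
      ≤ -(-(1 / (4 * π)) * ∫ x : Metric.sphere (0 : EuclideanSpace ℝ (Fin 3)) 1,
          f (u, x) ∂μH[2]) := by
    intro u
    have h1 : ‖∫ x : Metric.sphere (0 : EuclideanSpace ℝ (Fin 3)) 1,
          f (u, x) • (x : EuclideanSpace ℝ (Fin 3)) ∂μH[2]‖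
        ≤ ∫ x : Metric.sphere (0 : EuclideanSpace ℝ (Fin 3)) 1, f (u, x) ∂μH[2] := by
      refine (norm_integral_le_integral_norm _).trans_eq ?_
      refine integral_congr_ae (Filter.Eventually.of_forall fun x => ?_)
      simp only [norm_smul, norm_eq_of_mem_sphere x, mul_one,
        Real.norm_of_nonneg (hf_nonneg _)]
    rw [norm_smul, norm_neg, Real.norm_of_nonneg (le_of_lt (by positivity)), neg_mul,
      neg_neg]
    exact mul_le_mul_of_nonneg_left h1 (by positivity)
  have key : ∀ a b : ℝ, a ≤ b → ‖m b - m a‖ ≤ m₀ a - m₀ b := by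
    intro a b hab
    have hmc : Continuous m := continuous_iff_continuousAt.2 fun x => (hm x).continuousAt
    have := image_norm_le_of_norm_deriv_right_le_deriv_boundary
      (f := fun x => m x - m a)
      (f' := fun u => (-(1 / (4 * π))) • ∫ x : Metric.sphere (0 : EuclideanSpace ℝ (Fin 3)) 1,
          f (u, x) • (x : EuclideanSpace ℝ (Fin 3)) ∂μH[2])
      (a := a) (b := b)
      ((hmc.sub continuous_const).continuousOn)
      (fun x _ => ((hm x).sub_const (m a)).hasDerivWithinAt)
      (B := fun x => m₀ a - m₀ x)
      (B' := fun x => -(-(1 / (4 * π)) * ∫ y : Metric.sphere (0 : EuclideanSpace ℝ (Fin 3)) 1,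
          f (x, y) ∂μH[2]))
      (by simp)
      (fun x => (hm₀ x).const_sub (m₀ a))
      (fun x _ => hbound x)
    simpa using this (Set.right_mem_Icc.2 hab)
  have anti : Antitone (fun u : ℝ => m₀ u - ‖m u‖) := by
    intro a b hab
    have h := key a b hab
    have h3 : ‖m a‖ ≤ ‖m b‖ + ‖m a - m b‖ := norm_le_insert' _ _
    rw [norm_sub_rev] at h3
    simp only
    linarith
  refine ⟨anti, fun u₀ u hu h₀ => ?_⟩
  have := anti hu
  simp only at this
  linarith
end

section
/- Let σ denote the 2-dimensional surface (Hausdorff) measure on the unit sphere S² ⊂ ℝ³. Let f : ℝ × S² → ℝ be continuous and nonnegative, and let m₀ : ℝ → ℝ and m : ℝ → ℝ³ be differentiable functions satisfying, for every u ∈ ℝ, m₀'(u) = -(1/(4π)) ∫_{S²} f(u,x) dσ(x) and m'(u) = -(1/(4π)) ∫_{S²} f(u,x) x dσ(x). If u₁ < u₀ and m₀(u) = ‖m(u)‖ for all u ∈ [u₁, u₀], then f(u,x) = 0 for all u ∈ [u₁, u₀] and all x ∈ S². -/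
open MeasureTheory Real
open scoped RealInnerProductSpace
open Metric Set Filter
open scoped NNReal ENNReal

noncomputable section
namespace BondiAux

abbrev E3 : Type := EuclideanSpace ℝ (Fin 3)
abbrev E2 : Type := EuclideanSpace ℝ (Fin 2)
abbrev S2 : Type := Metric.sphere (0 : E3) 1

/-- drop the `i`-th coordinate -/
def pr (i : Fin 3) (v : E3) : E2 := WithLp.toLp 2 (fun j => v (i.succAbove j))

@[simp] lemma pr_apply (i : Fin 3) (v : E3) (j : Fin 2) : pr i v j = v (i.succAbove j) := rfl

lemma norm_sq_eq (v : E3) : ‖v‖ ^ 2 = ∑ k, (v k) ^ 2 := by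
  rw [EuclideanSpace.norm_eq, Real.sq_sqrt (by positivity)]
  simp [sq_abs]

lemma norm_sq_eq2 (w : E2) : ‖w‖ ^ 2 = ∑ j, (w j) ^ 2 := by
  rw [EuclideanSpace.norm_eq, Real.sq_sqrt (by positivity)]
  simp [sq_abs]

lemma dist_sq_split (i : Fin 3) (v w : E3) :
    dist v w ^ 2 = (v i - w i) ^ 2 + dist (pr i v) (pr i w) ^ 2 := by
  rw [EuclideanSpace.dist_eq, EuclideanSpace.dist_eq,
    Real.sq_sqrt (by positivity), Real.sq_sqrt (by positivity),
    Fin.sum_univ_succAbove (fun k => dist (v k) (w k) ^ 2) i]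
  simp [Real.dist_eq, sq_abs]

lemma pr_dist_le (i : Fin 3) (v w : E3) : dist (pr i v) (pr i w) ≤ dist v w := by
  have h := dist_sq_split i v w
  nlinarith [dist_nonneg (x := pr i v) (y := pr i w), dist_nonneg (x := v) (y := w), sq_nonneg (v i - w i)]

@[simp] lemma pr_zero (i : Fin 3) : pr i (0 : E3) = 0 := by ext j; simp

lemma pr_norm_le (i : Fin 3) (v : E3) : ‖pr i v‖ ≤ ‖v‖ := by
  have := pr_dist_le i v 0
  simpa [dist_zero_right] using this

lemma sphere_coord_sq (i : Fin 3) (x : S2) :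
    ((x : E3) i) ^ 2 = 1 - ‖pr i (x : E3)‖ ^ 2 := by
  have hx : ‖(x : E3)‖ = 1 := norm_eq_of_mem_sphere x
  have h := norm_sq_eq (x : E3)
  rw [hx] at h
  rw [Fin.sum_univ_succAbove (fun k => ((x : E3) k) ^ 2) i] at h
  rw [norm_sq_eq2]
  simp only [pr_apply]
  linarith

/-- inverse parametrization of a cap -/
def gm (i : Fin 3) (s : ℝ) (w : E2) : E3 :=
  WithLp.toLp 2 (i.insertNth (s * Real.sqrt (1 - ‖w‖ ^ 2)) (fun j => w j))

lemma gm_continuous (i : Fin 3) (s : ℝ) : Continuous (gm i s) := by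
  have h1 : Continuous fun w : E2 => s * Real.sqrt (1 - ‖w‖ ^ 2) := by
    exact continuous_const.mul (Real.continuous_sqrt.comp (by fun_prop))
  have h2 : Continuous fun (w : E2) (j : Fin 2) => w j := by fun_prop
  have h3 : Continuous fun w : E2 => (i.insertNth (s * Real.sqrt (1 - ‖w‖ ^ 2))
      (fun j => w j) : Fin 3 → ℝ) := Continuous.finInsertNth i h1 h2
  exact (PiLp.continuous_toLp (p := 2) (β := fun _ : Fin 3 => ℝ)).comp h3

@[simp] lemma gm_apply_same (i : Fin 3) (s : ℝ) (w : E2) :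
    gm i s w i = s * Real.sqrt (1 - ‖w‖ ^ 2) :=
  Fin.insertNth_apply_same (α := fun _ => ℝ) i (s * Real.sqrt (1 - ‖w‖ ^ 2)) (fun j => w j)

@[simp] lemma gm_apply_succAbove (i : Fin 3) (s : ℝ) (w : E2) (j : Fin 2) :
    gm i s w (i.succAbove j) = w j :=
  Fin.insertNth_apply_succAbove (α := fun _ => ℝ) i (s * Real.sqrt (1 - ‖w‖ ^ 2)) (fun j => w j) j

lemma gm_norm (i : Fin 3) {s : ℝ} (hs : s = 1 ∨ s = -1) {w : E2} (hw : ‖w‖ ≤ 1) :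
    ‖gm i s w‖ = 1 := by
  have hw2 : ‖w‖ ^ 2 ≤ 1 := by nlinarith [norm_nonneg w]
  have hs2 : s ^ 2 = 1 := by rcases hs with h | h <;> simp [h]
  have : ‖gm i s w‖ ^ 2 = 1 := by
    rw [norm_sq_eq, Fin.sum_univ_succAbove (fun k => (gm i s w k) ^ 2) i]
    simp only [gm_apply_same, gm_apply_succAbove, mul_pow, hs2,
      Real.sq_sqrt (by linarith : (0:ℝ) ≤ 1 - ‖w‖ ^ 2), one_mul]
    have := norm_sq_eq2 w
    linarith
  nlinarith [norm_nonneg (gm i s w)]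

lemma pr_gm (i : Fin 3) (s : ℝ) (w : E2) : pr i (gm i s w) = w := by
  ext j
  simp

lemma gm_pr (i : Fin 3) {s : ℝ} (hs : s = 1 ∨ s = -1) (x : S2)
    (hx : 0 ≤ s * (x : E3) i) : gm i s (pr i (x : E3)) = (x : E3) := by
  have hsq : 1 - ‖pr i (x : E3)‖ ^ 2 = ((x : E3) i) ^ 2 := by
    have := sphere_coord_sq i x; linarith
  have hs2 : s * s = 1 := by rcases hs with h | h <;> rw [h] <;> norm_num
  have habs : Real.sqrt (((x : E3) i) ^ 2) = s * ((x : E3) i) := by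
    rw [Real.sqrt_sq_eq_abs]
    rcases hs with h | h
    · simp only [h, one_mul] at hx ⊢; exact abs_of_nonneg hx
    · simp only [h, neg_one_mul] at hx ⊢
      exact abs_of_nonpos (by linarith)
  ext k
  refine Fin.succAboveCases i ?_ (fun j => ?_) k
  · rw [gm_apply_same, hsq, habs, ← mul_assoc, hs2, one_mul]
  · simp


lemma cap_dist_le (i : Fin 3) {s : ℝ} (hs : s = 1 ∨ s = -1) (x y : S2)
    (hx : 1/2 ≤ s * (x : E3) i) (hy : 1/2 ≤ s * (y : E3) i) :
    dist (x : E3) (y : E3) ≤ 3 * dist (pr i (x : E3)) (pr i (y : E3)) := by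
  set a : ℝ := (x : E3) i
  set b : ℝ := (y : E3) i
  set P : E2 := pr i (x : E3)
  set Q : E2 := pr i (y : E3)
  have hs2 : s * s = 1 := by rcases hs with h | h <;> rw [h] <;> norm_num
  have ha : a ^ 2 = 1 - ‖P‖ ^ 2 := sphere_coord_sq i x
  have hb : b ^ 2 = 1 - ‖Q‖ ^ 2 := sphere_coord_sq i y
  have hd : dist P Q = ‖P - Q‖ := dist_eq_norm P Q
  have hPn : ‖P‖ ≤ 1 := by
    have := pr_norm_le i (x : E3)
    rwa [norm_eq_of_mem_sphere x] at this
  have hQn : ‖Q‖ ≤ 1 := by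
    have := pr_norm_le i (y : E3)
    rwa [norm_eq_of_mem_sphere y] at this
  have hnn : |‖P‖ - ‖Q‖| ≤ ‖P - Q‖ := abs_norm_sub_norm_le P Q
  -- |a - b| ≤ 2 * ‖P - Q‖
  have hab : |a - b| ≤ 2 * ‖P - Q‖ := by
    have h1 : 1 ≤ s * a + s * b := by linarith
    have h2 : |a - b| * (s * a + s * b) = |a ^ 2 - b ^ 2| := by
      have : a ^ 2 - b ^ 2 = (a - b) * (s * (s * a + s * b)) := by ring_nf; nlinarith [hs2]
      rw [this, abs_mul]
      have hsabs : |s * (s * a + s * b)| = s * a + s * b := by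
        rcases hs with h | h
        · subst h
          simp only [one_mul] at hx hy ⊢
          exact abs_of_nonneg (by linarith)
        · subst h
          have he : (-1 : ℝ) * ((-1) * a + (-1) * b) = a + b := by ring
          rw [he, abs_of_nonpos (by linarith)]
          ring
      rw [hsabs]
    have h3 : |a ^ 2 - b ^ 2| ≤ 2 * ‖P - Q‖ := by
      have : a ^ 2 - b ^ 2 = (‖Q‖ - ‖P‖) * (‖Q‖ + ‖P‖) := by rw [ha, hb]; ring
      rw [this, abs_mul]
      have := abs_norm_sub_norm_le Q P
      have h4 : |‖Q‖ + ‖P‖| ≤ 2 := by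
        rw [abs_of_nonneg (by positivity)]; linarith
      nlinarith [abs_nonneg (‖Q‖ - ‖P‖), norm_nonneg (Q - P), abs_norm_sub_norm_le Q P,
        (norm_sub_rev Q P)]
    calc |a - b| ≤ |a - b| * (s * a + s * b) := by nlinarith [abs_nonneg (a - b)]
      _ = |a ^ 2 - b ^ 2| := h2
      _ ≤ 2 * ‖P - Q‖ := h3
  have hsplit := dist_sq_split i (x : E3) (y : E3)
  have hda : dist (x : E3) (y : E3) ^ 2 ≤ 9 * (dist P Q) ^ 2 := by
    rw [hsplit, hd]
    have : (a - b) ^ 2 ≤ (2 * ‖P - Q‖) ^ 2 := by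
      have := sq_le_sq' (by linarith [abs_nonneg (a-b), neg_abs_le (a-b)] : -(2 * ‖P - Q‖) ≤ a - b) (by linarith [le_abs_self (a-b)] : a - b ≤ 2 * ‖P - Q‖)
      exact this
    nlinarith [norm_nonneg (P - Q)]
  have h9 : (3 * dist P Q) ^ 2 = 9 * dist P Q ^ 2 := by ring
  nlinarith [dist_nonneg (x := (x : E3)) (y := (y : E3)), dist_nonneg (x := P) (y := Q)]

instance : MeasureTheory.Measure.IsAddHaarMeasure (μH[(2:ℝ)] : Measure E2) := by
  have h := MeasureTheory.isAddHaarMeasure_hausdorffMeasure (E := E2)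
  simpa using h


/-- the closed cap as a set in the sphere -/
def cap (i : Fin 3) (s : ℝ) : Set S2 := {x : S2 | 1/2 ≤ s * (x : E3) i}

lemma cap_measure_lt_top (i : Fin 3) {s : ℝ} (hs : s = 1 ∨ s = -1) :
    μH[(2:ℝ)] (cap i s) < ⊤ := by
  set C := cap i s
  let q : C → E2 := fun y => pr i ((y : S2) : E3)
  have hanti : AntilipschitzWith 3 q := by
    refine AntilipschitzWith.of_le_mul_dist fun x y => ?_
    have h1 : dist x y = dist ((x : S2) : E3) ((y : S2) : E3) := rfl
    have h2 := cap_dist_le i hs (x : S2) (y : S2) x.2 y.2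
    rw [h1]
    simpa using h2
  have hiso : Isometry (Subtype.val : C → S2) := isometry_subtype_coe
  have h0 : μH[(2:ℝ)] C = μH[(2:ℝ)] (univ : Set C) := by
    rw [← hiso.hausdorffMeasure_image (Or.inl (by norm_num)) univ, Set.image_univ,
      Subtype.range_coe]
  rw [h0]
  have h1 := hanti.le_hausdorffMeasure_image (by norm_num : (0:ℝ) ≤ 2) univ
  have h2 : q '' univ ⊆ Metric.closedBall (0 : E2) 1 := by
    rintro _ ⟨y, -, rfl⟩
    rw [Metric.mem_closedBall, dist_zero_right]
    have := pr_norm_le i ((y : S2) : E3)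
    rwa [norm_eq_of_mem_sphere (y : S2)] at this
  have h3 : μH[(2:ℝ)] (q '' univ) < ⊤ :=
    lt_of_le_of_lt (measure_mono h2) (isCompact_closedBall _ _).measure_lt_top
  calc μH[(2:ℝ)] (univ : Set C) ≤ (3:ℝ≥0) ^ (2:ℝ) * μH[(2:ℝ)] (q '' univ) := h1
    _ < ⊤ := by
        apply ENNReal.mul_lt_top _ h3
        exact ENNReal.rpow_lt_top_of_nonneg (by norm_num) (by simp)

lemma exists_cap (x : S2) : ∃ i : Fin 3, ∃ s : ℝ, (s = 1 ∨ s = -1) ∧ 1/2 < s * (x : E3) i := by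
  have hx : ∑ k, ((x : E3) k) ^ 2 = 1 := by
    have := norm_sq_eq (x : E3)
    rw [norm_eq_of_mem_sphere x] at this
    linarith
  have : ∃ k, (1:ℝ)/3 ≤ ((x : E3) k) ^ 2 := by
    by_contra h
    push_neg at h
    have := Finset.sum_lt_sum_of_nonempty (Finset.univ_nonempty (α := Fin 3))
      (fun k _ => h k)
    simp only [Finset.sum_const, Finset.card_univ, Fintype.card_fin, nsmul_eq_mul] at this
    rw [hx] at this
    norm_num at this
  obtain ⟨k, hk⟩ := this
  have habs : 1/2 < |(x : E3) k| := by
    nlinarith [abs_nonneg ((x : E3) k), sq_abs ((x : E3) k)]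
  rcases le_or_gt 0 ((x : E3) k) with h | h
  · exact ⟨k, 1, Or.inl rfl, by rwa [one_mul, ← abs_of_nonneg h]⟩
  · exact ⟨k, -1, Or.inr rfl, by rw [neg_one_mul, ← abs_of_neg h]; exact habs⟩

instance : IsFiniteMeasure (μH[(2:ℝ)] : Measure S2) := by
  constructor
  have hcover : (univ : Set S2) ⊆ ⋃ p : Fin 3 × Bool, cap p.1 (if p.2 then 1 else -1) := by
    intro x _
    obtain ⟨i, s, hs, hlt⟩ := exists_cap x
    rcases hs with h | h
    · exact Set.mem_iUnion.2 ⟨(i, true), by simpa [cap, h] using hlt.le⟩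
    · exact Set.mem_iUnion.2 ⟨(i, false), by simpa [cap, h] using hlt.le⟩
  calc μH[(2:ℝ)] (univ : Set S2) ≤ μH[(2:ℝ)] (⋃ p : Fin 3 × Bool, cap p.1 (if p.2 then 1 else -1)) :=
        measure_mono hcover
    _ ≤ ∑' p : Fin 3 × Bool, μH[(2:ℝ)] (cap p.1 (if p.2 then 1 else -1)) := measure_iUnion_le _
    _ < ⊤ := by
        rw [tsum_fintype]
        refine ENNReal.sum_lt_top.2 fun p _ => ?_
        exact cap_measure_lt_top p.1 (by rcases p.2 <;> simp)

instance : (μH[(2:ℝ)] : Measure S2).IsOpenPosMeasure := by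
  constructor
  intro U hU hUne
  obtain ⟨x₀, hx₀⟩ := hUne
  obtain ⟨i, s, hs, hlt⟩ := exists_cap x₀
  -- the projection is 1-Lipschitz on the sphere
  have hq : LipschitzWith 1 (fun x : S2 => pr i (x : E3)) := by
    refine LipschitzWith.of_dist_le_mul fun x y => ?_
    simp only [NNReal.coe_one, one_mul, Subtype.dist_eq]
    exact pr_dist_le i _ _
  obtain ⟨O, hO, hOU⟩ := isOpen_induced_iff.1 hU
  set w₀ : E2 := pr i ((x₀ : E3))
  have hw₀ : ‖w₀‖ ^ 2 < 3/4 := by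
    have h1 := sphere_coord_sq i x₀
    nlinarith [sq_nonneg (s * ((x₀ : E3) i)), (by rcases hs with h | h <;> rw [h] <;> norm_num : s * s = 1),
      sq_nonneg ((x₀ : E3) i - s * (1/2))]
  set W : Set E2 := Metric.ball (0 : E2) (Real.sqrt 3 / 2) ∩ gm i s ⁻¹' O
  have hWopen : IsOpen W := (Metric.isOpen_ball).inter (hO.preimage (gm_continuous i s))
  have hw₀W : w₀ ∈ W := by
    constructor
    · rw [Metric.mem_ball, dist_zero_right]
      nlinarith [Real.sq_sqrt (by norm_num : (0:ℝ) ≤ 3), Real.sqrt_nonneg 3, norm_nonneg w₀]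
    · show gm i s w₀ ∈ O
      rw [gm_pr i hs x₀ (by linarith)]
      have h := hx₀
      rw [← hOU] at h
      exact h
  have hsub : W ⊆ (fun x : S2 => pr i (x : E3)) '' U := by
    rintro w ⟨hw1, hw2⟩
    have hwn : ‖w‖ ≤ 1 := by
      rw [Metric.mem_ball, dist_zero_right] at hw1
      nlinarith [Real.sq_sqrt (by norm_num : (0:ℝ) ≤ 3), Real.sqrt_nonneg 3, norm_nonneg w]
    have hmem : gm i s w ∈ Metric.sphere (0:E3) 1 := by
      rw [mem_sphere_zero_iff_norm]; exact gm_norm i hs hwn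
    refine ⟨⟨gm i s w, hmem⟩, ?_, ?_⟩
    · rw [← hOU]; exact hw2
    · exact pr_gm i s w
  intro h0
  have h1 : μH[(2:ℝ)] ((fun x : S2 => pr i (x : E3)) '' U) ≤ (1:ℝ≥0) ^ (2:ℝ) * μH[(2:ℝ)] U :=
    hq.hausdorffMeasure_image_le (by norm_num) U
  have h2 : 0 < μH[(2:ℝ)] W := hWopen.measure_pos _ ⟨w₀, hw₀W⟩
  have h3 : μH[(2:ℝ)] W ≤ μH[(2:ℝ)] ((fun x : S2 => pr i (x:E3)) '' U) := measure_mono hsub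
  rw [h0] at h1
  simp only [mul_zero, ENNReal.coe_one, ENNReal.one_rpow, nonpos_iff_eq_zero] at h1
  rw [le_antisymm (h3.trans (le_of_eq h1)) zero_le] at h2
  exact lt_irrefl _ h2

instance : NullSingletonClass (μH[(2:ℝ)] : Measure S2) :=
  MeasureTheory.Measure.nullSingletonClass_hausdorff S2 (by norm_num)

end BondiAux

open BondiAux

/-- **Rigidity in the Bondi energy positivity theorems.**
Under the Bondi energy-momentum loss formulas, if `m₀ u = ‖m u‖` on an interval
`[u₁, u₀]` with `u₁ < u₀`, then the (nonnegative, continuous) radiation density `f`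
vanishes identically on `[u₁, u₀] × S²`. -/
theorem bondi_rigidity
    (f : ℝ × (Metric.sphere (0 : EuclideanSpace ℝ (Fin 3)) 1) → ℝ)
    (hf_cont : Continuous f)
    (hf_nonneg : ∀ p, 0 ≤ f p)
    (m₀ : ℝ → ℝ) (m : ℝ → EuclideanSpace ℝ (Fin 3))
    (hm₀ : ∀ u : ℝ, HasDerivAt m₀
      (-(1 / (4 * π)) * ∫ x : Metric.sphere (0 : EuclideanSpace ℝ (Fin 3)) 1,
        f (u, x) ∂μH[2]) u)
    (hm : ∀ u : ℝ, HasDerivAt m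
      ((-(1 / (4 * π))) • ∫ x : Metric.sphere (0 : EuclideanSpace ℝ (Fin 3)) 1,
        f (u, x) • (x : EuclideanSpace ℝ (Fin 3)) ∂μH[2]) u)
    (u₁ u₀ : ℝ) (h₁₀ : u₁ < u₀)
    (hsat : ∀ u ∈ Set.Icc u₁ u₀, m₀ u = ‖m u‖) :
    ∀ u ∈ Set.Icc u₁ u₀, ∀ x : Metric.sphere (0 : EuclideanSpace ℝ (Fin 3)) 1,
      f (u, x) = 0 := by
  have hfu_cont : ∀ u : ℝ, Continuous fun x : S2 => f (u, x) :=
    fun u => hf_cont.comp (Continuous.prodMk_right u)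
  have hint : ∀ u : ℝ, Integrable (fun x : S2 => f (u, x)) μH[2] := fun u =>
    (hfu_cont u).integrable_of_hasCompactSupport (HasCompactSupport.of_compactSpace _)
  have hintV : ∀ u : ℝ, Integrable (fun x : S2 => f (u, x) • (x : E3)) μH[2] := fun u =>
    (((hfu_cont u).smul continuous_subtype_val)).integrable_of_hasCompactSupport
      (HasCompactSupport.of_compactSpace _)
  set F : ℝ → ℝ := fun u => ∫ x : S2, f (u, x) ∂μH[2] with hF
  set V : ℝ → E3 := fun u => ∫ x : S2, f (u, x) • (x : E3) ∂μH[2] with hV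
  have hFnn : ∀ u, 0 ≤ F u := fun u => integral_nonneg fun x => hf_nonneg _
  have hVle : ∀ u, ‖V u‖ ≤ F u := by
    intro u
    refine (norm_integral_le_integral_norm _).trans_eq ?_
    rw [hF]
    congr 1
    funext x
    rw [norm_smul, norm_eq_of_mem_sphere x, mul_one, Real.norm_eq_abs,
      abs_of_nonneg (hf_nonneg _)]
  have hπ : (0:ℝ) < 1 / (4 * π) := by positivity
  -- key step on the open interval
  have key : ∀ u ∈ Set.Ioo u₁ u₀, ∀ x : S2, f (u, x) = 0 := by
    intro u hu
    have hFle : F u ≤ ‖V u‖ := by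
      have h1 : Tendsto (fun v => |slope m₀ u v|) (nhdsWithin u {u}ᶜ)
          (nhds |(-(1 / (4 * π))) * F u|) :=
        (hasDerivAt_iff_tendsto_slope.1 (hm₀ u)).abs
      have h2 : Tendsto (fun v => ‖slope m u v‖) (nhdsWithin u {u}ᶜ)
          (nhds ‖(-(1 / (4 * π))) • V u‖) :=
        (hasDerivAt_iff_tendsto_slope.1 (hm u)).norm
      have hev : ∀ᶠ v in nhdsWithin u {u}ᶜ, |slope m₀ u v| ≤ ‖slope m u v‖ := by
        filter_upwards [mem_nhdsWithin_of_mem_nhds (Ioo_mem_nhds hu.1 hu.2),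
          self_mem_nhdsWithin] with v hv hvne
        have hvu : v ≠ u := hvne
        rw [slope_def_field, slope_def_module, norm_smul]
        rw [div_eq_inv_mul, abs_mul, abs_inv]
        have hnormeq : ‖(v - u)⁻¹‖ = |v - u|⁻¹ := by
          rw [Real.norm_eq_abs, abs_inv]
        rw [hnormeq]
        have hpos : (0:ℝ) < |v - u|⁻¹ := by
          rw [inv_pos, abs_pos, sub_ne_zero]; exact hvu
        refine mul_le_mul_of_nonneg_left ?_ hpos.le
        rw [hsat v (Set.Ioo_subset_Icc_self hv), hsat u (Set.Ioo_subset_Icc_self hu)]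
        exact abs_norm_sub_norm_le (m v) (m u)
      have hle := le_of_tendsto_of_tendsto h1 h2 hev
      rw [abs_mul, norm_smul, Real.norm_eq_abs] at hle
      have habs : |(-(1 / (4 * π)))| = 1 / (4 * π) := by
        rw [abs_neg, abs_of_pos hπ]
      rw [habs] at hle
      have := (mul_le_mul_iff_right₀ hπ).1 hle
      rwa [abs_of_nonneg (hFnn u)] at this
    have hEq : ‖V u‖ = F u := le_antisymm (hVle u) hFle
    -- now the equality case analysis
    set g : S2 → ℝ := fun x => f (u, x) with hg
    suffices hgz : g = 0 by
      intro x
      exact congrFun hgz x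
    rcases eq_or_lt_of_le (hFnn u) with hc | hc
    · -- total flux is zero
      have hae : g =ᶠ[ae (μH[2] : Measure S2)] 0 :=
        (integral_eq_zero_iff_of_nonneg (fun x => hf_nonneg _) (hint u)).1 hc.symm
      exact ((hfu_cont u).ae_eq_iff_eq (μH[2]) continuous_const).1 hae
    · set c : ℝ := F u with hcdef
      set e : E3 := c⁻¹ • V u with he_def
      have hVnorm : ‖V u‖ = c := hEq
      have he : ‖e‖ = 1 := by
        rw [he_def, norm_smul, hVnorm, norm_inv, Real.norm_eq_abs,
          abs_of_pos hc, inv_mul_cancel₀ hc.ne']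
      have hinner_int : ∫ x : S2, ⟪e, g x • (x : E3)⟫ ∂μH[2] = c := by
        rw [integral_inner (hintV u) e]
        change ⟪e, V u⟫ = c
        rw [he_def, real_inner_smul_left, real_inner_self_eq_norm_sq, hVnorm]
        field_simp
      set h : S2 → ℝ := fun x => g x - ⟪e, g x • (x : E3)⟫ with hh
      have hh_nonneg : ∀ x, 0 ≤ h x := by
        intro x
        rw [hh]
        simp only [real_inner_smul_right]
        have h1 : ⟪e, (x : E3)⟫ ≤ 1 := by
          have := real_inner_le_norm e (x : E3)
          rwa [he, norm_eq_of_mem_sphere x, one_mul] at this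
        nlinarith [hf_nonneg (u, x)]
      have hInt2 : Integrable (fun x : S2 => ⟪e, g x • (x : E3)⟫) μH[2] := by
        have h' := (hintV u).inner_const (𝕜 := ℝ) e
        have heq2 : (fun x : S2 => ⟪e, g x • (x : E3)⟫)
            = fun x : S2 => ⟪g x • (x : E3), e⟫ := by
          funext x; exact real_inner_comm _ _
        rw [heq2]; exact h'
      have hh_int : Integrable h μH[2] := (hint u).sub hInt2
      have hh_cont : Continuous h := by
        refine (hfu_cont u).sub ?_
        exact continuous_const.inner (((hfu_cont u).smul continuous_subtype_val))
      have hh_zero : ∫ x : S2, h x ∂μH[2] = 0 := by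
        rw [hh, integral_sub (hint u) hInt2, hinner_int]
        change F u - c = 0
        exact sub_eq_zero.2 hcdef.symm
      have hae : h =ᶠ[ae (μH[2] : Measure S2)] 0 :=
        (integral_eq_zero_iff_of_nonneg hh_nonneg hh_int).1 hh_zero
      have hzero : h = 0 := (hh_cont.ae_eq_iff_eq (μH[2]) continuous_const).1 hae
      -- pointwise: g x * (1 - ⟪e,x⟫) = 0
      set E : S2 := ⟨e, by rw [mem_sphere_zero_iff_norm]; exact he⟩ with hE
      have hg0 : ∀ x : S2, x ≠ E → g x = 0 := by
        intro x hx
        have hx0 : h x = 0 := congrFun hzero x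
        rw [hh] at hx0
        simp only [real_inner_smul_right] at hx0
        have hne : ⟪e, (x : E3)⟫ ≠ 1 := by
          intro hcon
          have := (inner_eq_one_iff_of_norm_eq_one (𝕜 := ℝ) he (norm_eq_of_mem_sphere x)).1 hcon
          exact hx (Subtype.ext this.symm)
        have : g x * (1 - ⟪e, (x : E3)⟫) = 0 := by linear_combination hx0
        rcases mul_eq_zero.1 this with h' | h'
        · exact h'
        · exact absurd (by linarith : ⟪e, (x : E3)⟫ = 1) hne
      have hae2 : g =ᶠ[ae (μH[2] : Measure S2)] 0 := by
        have hsub : {x : S2 | ¬ g x = 0} ⊆ {E} := by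
          intro x hx
          by_contra hxe
          exact hx (hg0 x hxe)
        have : (μH[2] : Measure S2) {x : S2 | ¬ g x = 0} = 0 :=
          measure_mono_null hsub (measure_singleton E)
        exact this
      exact ((hfu_cont u).ae_eq_iff_eq (μH[2]) continuous_const).1 hae2
  -- extend to the closed interval by continuity
  intro u hu x
  have heq : Set.EqOn (fun v => f (v, x)) 0 (Set.Ioo u₁ u₀) := fun v hv => key v hv x
  have hcl := heq.closure (hf_cont.comp (continuous_id.prodMk continuous_const)) continuous_const
  rw [closure_Ioo h₁₀.ne] at hcl
  exact hcl hu
end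
end

section
/- Let p, q : (0,π) × ℝ → ℝ be continuously differentiable, with q 2π-periodic in the second variable ψ. Assume that p(θ,ψ)·sin θ → 0 as θ → 0⁺ and as θ → π⁻, uniformly in ψ, and that the function (θ,ψ) ↦ (∂_θ p + p·cot θ + (∂_ψ q)/sin θ)·sin θ is integrable on (0,π) × (0,2π). Then ∫₀^{π} ∫₀^{2π} (∂_θ p(θ,ψ) + p(θ,ψ) cot θ + (∂_ψ q(θ,ψ))/sin θ) sin θ dψ dθ = 0. -/
open MeasureTheory Real intervalIntegral

lemma aux_fderiv_cont (p : ℝ → ℝ → ℝ)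
    (hp : ContDiffOn ℝ 1 (fun x : ℝ × ℝ => p x.1 x.2) (Set.Ioo 0 π ×ˢ Set.univ))
    (v : ℝ × ℝ) :
    ContinuousOn (fun x : ℝ × ℝ => (fderiv ℝ (fun y : ℝ × ℝ => p y.1 y.2) x) v)
      (Set.Ioo 0 π ×ˢ Set.univ) :=
  (hp.continuousOn_fderiv_of_isOpen (isOpen_Ioo.prod isOpen_univ) le_rfl).clm_apply
    continuousOn_const

lemma aux_hasDerivAt_fst (p : ℝ → ℝ → ℝ)
    (hp : ContDiffOn ℝ 1 (fun x : ℝ × ℝ => p x.1 x.2) (Set.Ioo 0 π ×ˢ Set.univ))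
    {θ : ℝ} (hθ : θ ∈ Set.Ioo 0 π) (ψ : ℝ) :
    HasDerivAt (fun t => p t ψ)
      ((fderiv ℝ (fun y : ℝ × ℝ => p y.1 y.2) (θ, ψ)) (1, 0)) θ := by
  have hmem : ((θ, ψ) : ℝ × ℝ) ∈ Set.Ioo 0 π ×ˢ (Set.univ : Set ℝ) := ⟨hθ, trivial⟩
  have hdiff : DifferentiableAt ℝ (fun y : ℝ × ℝ => p y.1 y.2) (θ, ψ) :=
    (hp.contDiffAt (((isOpen_Ioo.prod isOpen_univ)).mem_nhds hmem)).differentiableAt one_ne_zero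
  have hc : HasDerivAt (fun t : ℝ => ((t, ψ) : ℝ × ℝ)) ((1 : ℝ), (0 : ℝ)) θ :=
    (hasDerivAt_id θ).prodMk (hasDerivAt_const θ ψ)
  exact hdiff.hasFDerivAt.comp_hasDerivAt θ hc

lemma aux_hasDerivAt_snd (q : ℝ → ℝ → ℝ)
    (hq : ContDiffOn ℝ 1 (fun x : ℝ × ℝ => q x.1 x.2) (Set.Ioo 0 π ×ˢ Set.univ))
    {θ : ℝ} (hθ : θ ∈ Set.Ioo 0 π) (ψ : ℝ) :
    HasDerivAt (fun s => q θ s)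
      ((fderiv ℝ (fun y : ℝ × ℝ => q y.1 y.2) (θ, ψ)) (0, 1)) ψ := by
  have hmem : ((θ, ψ) : ℝ × ℝ) ∈ Set.Ioo 0 π ×ˢ (Set.univ : Set ℝ) := ⟨hθ, trivial⟩
  have hdiff : DifferentiableAt ℝ (fun y : ℝ × ℝ => q y.1 y.2) (θ, ψ) :=
    (hq.contDiffAt (((isOpen_Ioo.prod isOpen_univ)).mem_nhds hmem)).differentiableAt one_ne_zero
  have hc : HasDerivAt (fun s : ℝ => ((θ, s) : ℝ × ℝ)) ((0 : ℝ), (1 : ℝ)) ψ :=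
    (hasDerivAt_const ψ θ).prodMk (hasDerivAt_id ψ)
  exact hdiff.hasFDerivAt.comp_hasDerivAt ψ hc

/-- **Integration-by-parts lemma on the sphere.** The angular divergence term
`p_{,θ} + p cot θ + q_{,ψ} csc θ` integrates to zero over the unit sphere
parametrized by polar coordinates `(θ, ψ)` with area element `sin θ dθ dψ`,
for `q` periodic in `ψ` and `p sin θ` vanishing at the poles. -/
theorem angular_divergence_integral_zero
    (p q : ℝ → ℝ → ℝ)
    (hp : ContDiffOn ℝ 1 (fun x : ℝ × ℝ => p x.1 x.2) (Set.Ioo 0 π ×ˢ Set.univ))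
    (hq : ContDiffOn ℝ 1 (fun x : ℝ × ℝ => q x.1 x.2) (Set.Ioo 0 π ×ˢ Set.univ))
    (hqper : ∀ θ ψ, q θ (ψ + 2 * π) = q θ ψ)
    (hpoles : ∀ ε > (0 : ℝ), ∃ δ > (0 : ℝ), ∀ θ ∈ Set.Ioo 0 π, ∀ ψ : ℝ,
      (θ < δ ∨ π - θ < δ) → |p θ ψ * Real.sin θ| < ε)
    (hint : MeasureTheory.IntegrableOn
      (fun x : ℝ × ℝ =>
        (deriv (fun θ' => p θ' x.2) x.1 + p x.1 x.2 * (Real.cos x.1 / Real.sin x.1)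
          + deriv (fun ψ' => q x.1 ψ') x.2 / Real.sin x.1) * Real.sin x.1)
      (Set.Ioo 0 π ×ˢ Set.Ioo 0 (2 * π))) :
    ∫ θ in (0:ℝ)..π, ∫ ψ in (0:ℝ)..(2 * π),
      (deriv (fun θ' => p θ' ψ) θ + p θ ψ * (Real.cos θ / Real.sin θ)
        + deriv (fun ψ' => q θ ψ') ψ / Real.sin θ) * Real.sin θ = 0 := by
  have pi_pos := Real.pi_pos
  set U : Set (ℝ × ℝ) := Set.Ioo 0 π ×ˢ Set.univ with hUdef
  set g : ℝ × ℝ → ℝ := fun x : ℝ × ℝ =>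
    (deriv (fun θ' => p θ' x.2) x.1 + p x.1 x.2 * (Real.cos x.1 / Real.sin x.1)
      + deriv (fun ψ' => q x.1 ψ') x.2 / Real.sin x.1) * Real.sin x.1 with hgdef
  set G : ℝ × ℝ → ℝ := fun x : ℝ × ℝ =>
    (fderiv ℝ (fun y : ℝ × ℝ => p y.1 y.2) x) (1, 0) * Real.sin x.1
      + p x.1 x.2 * Real.cos x.1 with hGdef
  set H : ℝ × ℝ → ℝ := fun x : ℝ × ℝ =>
    (fderiv ℝ (fun y : ℝ × ℝ => q y.1 y.2) x) (0, 1) with hHdef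
  -- continuity
  have hGc : ContinuousOn G U :=
    ((aux_fderiv_cont p hp (1, 0)).mul
        (Real.continuous_sin.comp continuous_fst).continuousOn).add
      (hp.continuousOn.mul (Real.continuous_cos.comp continuous_fst).continuousOn)
  have hHc : ContinuousOn H U := aux_fderiv_cont q hq (0, 1)
  -- claim A : g = G + H on U
  have hA : ∀ θ ∈ Set.Ioo 0 π, ∀ ψ : ℝ, g (θ, ψ) = G (θ, ψ) + H (θ, ψ) := by
    intro θ hθ ψ
    have hs : Real.sin θ ≠ 0 := (Real.sin_pos_of_pos_of_lt_pi hθ.1 hθ.2).ne'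
    have h1 : deriv (fun θ' => p θ' ψ) θ
        = (fderiv ℝ (fun y : ℝ × ℝ => p y.1 y.2) (θ, ψ)) (1, 0) :=
      (aux_hasDerivAt_fst p hp hθ ψ).deriv
    have h2 : deriv (fun ψ' => q θ ψ') ψ
        = (fderiv ℝ (fun y : ℝ × ℝ => q y.1 y.2) (θ, ψ)) (0, 1) :=
      (aux_hasDerivAt_snd q hq hθ ψ).deriv
    simp only [hgdef, hGdef, hHdef, h1, h2]
    field_simp
  -- claim B : the ψ-integral of H vanishes
  have hHslice : ∀ θ ∈ Set.Ioo 0 π, Continuous (fun s => H (θ, s)) := by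
    intro θ hθ
    exact hHc.comp_continuous (continuous_const.prodMk continuous_id)
      (fun s => ⟨hθ, trivial⟩)
  have hB : ∀ θ ∈ Set.Ioo 0 π, ∫ ψ in (0:ℝ)..(2 * π), H (θ, ψ) = 0 := by
    intro θ hθ
    have := intervalIntegral.integral_eq_sub_of_hasDerivAt
      (f := fun s => q θ s) (f' := fun s => H (θ, s)) (a := (0:ℝ)) (b := 2 * π)
      (fun x _ => aux_hasDerivAt_snd q hq hθ x)
      ((hHslice θ hθ).intervalIntegrable 0 (2 * π))
    rw [this]
    have := hqper θ 0
    simp at this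
    simp [this]
  
  have h2pi : (0:ℝ) < 2 * π := by linarith
  -- slice continuity of G
  have hGsliceθ : ∀ ψ : ℝ, ContinuousOn (fun t => G (t, ψ)) (Set.Ioo 0 π) := by
    intro ψ
    exact hGc.comp ((continuous_id.prodMk continuous_const).continuousOn)
      (fun t ht => ⟨ht, trivial⟩)
  have hGsliceψ : ∀ θ ∈ Set.Ioo 0 π, Continuous (fun s => G (θ, s)) := by
    intro θ hθ
    exact hGc.comp_continuous (continuous_const.prodMk continuous_id)
      (fun s => ⟨hθ, trivial⟩)
  -- derivative of p * sin
  have hPd : ∀ θ ∈ Set.Ioo 0 π, ∀ ψ : ℝ,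
      HasDerivAt (fun t => p t ψ * Real.sin t) (G (θ, ψ)) θ := by
    intro θ hθ ψ
    exact (aux_hasDerivAt_fst p hp hθ ψ).mul (Real.hasDerivAt_sin θ)
  -- Claim C
  have hC : ∀ a b : ℝ, a ∈ Set.Ioo 0 π → b ∈ Set.Ioo 0 π → a ≤ b →
      (∫ θ in a..b, (∫ ψ in (0:ℝ)..(2*π), G (θ, ψ)))
        = ∫ ψ in (0:ℝ)..(2*π), (p b ψ * Real.sin b - p a ψ * Real.sin a) := by
    intro a b ha hb hab
    have hsub : Set.Icc a b ⊆ Set.Ioo 0 π :=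
      fun x hx => ⟨lt_of_lt_of_le ha.1 hx.1, lt_of_le_of_lt hx.2 hb.2⟩
    have hKsub : Set.Icc a b ×ˢ Set.Icc (0:ℝ) (2*π) ⊆ U := fun x hx => ⟨hsub hx.1, trivial⟩
    have hGK : IntegrableOn G (Set.Icc a b ×ˢ Set.Icc (0:ℝ) (2*π)) :=
      (hGc.mono hKsub).integrableOn_compact (isCompact_Icc.prod isCompact_Icc)
    have hswap : (∫ θ in Set.Ioc a b, (∫ ψ in Set.Ioc (0:ℝ) (2*π), G (θ, ψ)))
        = ∫ ψ in Set.Ioc (0:ℝ) (2*π), (∫ θ in Set.Ioc a b, G (θ, ψ)) := by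
      apply MeasureTheory.integral_integral_swap
      rw [Measure.prod_restrict]
      exact hGK.mono_set (Set.prod_mono Set.Ioc_subset_Icc_self Set.Ioc_subset_Icc_self)
    have hinner : ∀ ψ : ℝ, (∫ θ in a..b, G (θ, ψ))
        = p b ψ * Real.sin b - p a ψ * Real.sin a := by
      intro ψ
      apply intervalIntegral.integral_eq_sub_of_hasDerivAt
      · intro x hx
        rw [Set.uIcc_of_le hab] at hx
        exact hPd x (hsub hx) ψ
      · apply ContinuousOn.intervalIntegrable
        exact (hGsliceθ ψ).mono (by rw [Set.uIcc_of_le hab]; exact hsub)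
    calc (∫ θ in a..b, (∫ ψ in (0:ℝ)..(2*π), G (θ, ψ)))
        = ∫ θ in Set.Ioc a b, (∫ ψ in Set.Ioc (0:ℝ) (2*π), G (θ, ψ)) := by
          simp only [intervalIntegral.integral_of_le hab,
            intervalIntegral.integral_of_le h2pi.le]
      _ = ∫ ψ in Set.Ioc (0:ℝ) (2*π), (∫ θ in Set.Ioc a b, G (θ, ψ)) := hswap
      _ = ∫ ψ in Set.Ioc (0:ℝ) (2*π), (p b ψ * Real.sin b - p a ψ * Real.sin a) := by
          have : (fun ψ => ∫ θ in Set.Ioc a b, G (θ, ψ))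
              = fun ψ => p b ψ * Real.sin b - p a ψ * Real.sin a := by
            funext ψ
            rw [← intervalIntegral.integral_of_le hab]
            exact hinner ψ
          rw [this]
      _ = ∫ ψ in (0:ℝ)..(2*π), (p b ψ * Real.sin b - p a ψ * Real.sin a) :=
          (intervalIntegral.integral_of_le h2pi.le).symm
  -- the inner integral
  set I : ℝ → ℝ := fun θ => ∫ ψ in (0:ℝ)..(2*π), g (θ, ψ) with hIdef
  have hIeq : ∀ θ ∈ Set.Ioo 0 π, I θ = ∫ ψ in (0:ℝ)..(2*π), G (θ, ψ) := by
    intro θ hθ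
    have h1 : I θ = ∫ ψ in (0:ℝ)..(2*π), (G (θ, ψ) + H (θ, ψ)) :=
      intervalIntegral.integral_congr (fun ψ _ => hA θ hθ ψ)
    rw [h1, intervalIntegral.integral_add
      ((hGsliceψ θ hθ).intervalIntegrable _ _)
      ((hHslice θ hθ).intervalIntegrable _ _), hB θ hθ, add_zero]
  -- integrability of I on Ioo 0 π
  have hIint : IntegrableOn I (Set.Ioo 0 π) := by
    have h1 : Integrable g
        ((volume.restrict (Set.Ioo 0 π)).prod (volume.restrict (Set.Ioo 0 (2*π)))) := by
      rw [Measure.prod_restrict]; exact hint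
    have h2 := h1.integral_prod_left
    have h3 : (fun θ => ∫ ψ in Set.Ioo (0:ℝ) (2*π), g (θ, ψ)) = I := by
      funext θ
      show (∫ ψ in Set.Ioo (0:ℝ) (2*π), g (θ, ψ)) = ∫ ψ in (0:ℝ)..(2*π), g (θ, ψ)
      rw [intervalIntegral.integral_of_le h2pi.le, MeasureTheory.integral_Ioc_eq_integral_Ioo]
    rw [← h3]
    exact h2
  -- the exhausting sequence
  set A : ℕ → ℝ := fun n => π / ((n : ℝ) + 2) with hAdef
  have hApos : ∀ n : ℕ, 0 < A n := fun n => div_pos pi_pos (by positivity)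
  have hAltpi : ∀ n : ℕ, A n < π := by
    intro n
    rw [hAdef]
    apply div_lt_self pi_pos
    have : (0:ℝ) ≤ (n:ℝ) := Nat.cast_nonneg n
    linarith
  have hAanti : ∀ m n : ℕ, m ≤ n → A n ≤ A m := by
    intro m n hmn
    simp only [hAdef]
    gcongr
  have hAB : ∀ n : ℕ, A n ≤ π - A n := by
    intro n
    have hd : (0:ℝ) < (n:ℝ) + 2 := by positivity
    rw [le_sub_iff_add_le, hAdef, ← add_div, div_le_iff₀ hd]
    have : (0:ℝ) ≤ (n:ℝ) := Nat.cast_nonneg n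
    nlinarith
  have haMem : ∀ n : ℕ, A n ∈ Set.Ioo 0 π := fun n => ⟨hApos n, hAltpi n⟩
  have hbMem : ∀ n : ℕ, π - A n ∈ Set.Ioo 0 π := by
    intro n
    constructor
    · linarith [hAltpi n]
    · linarith [hApos n]
  set S : ℕ → Set ℝ := fun n => Set.Ioc (A n) (π - A n) with hSdef
  have hSmeas : ∀ n : ℕ, MeasurableSet (S n) := fun n => measurableSet_Ioc
  have hSmono : Monotone S := by
    intro m n hmn
    exact Set.Ioc_subset_Ioc (hAanti m n hmn) (by linarith [hAanti m n hmn])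
  have hSunion : (⋃ n, S n) = Set.Ioo 0 π := by
    apply Set.Subset.antisymm
    · apply Set.iUnion_subset
      intro n x hx
      exact ⟨lt_trans (hApos n) hx.1, lt_of_le_of_lt hx.2 (by linarith [hApos n])⟩
    · intro x hx
      have hm : 0 < min x (π - x) := lt_min hx.1 (by linarith [hx.2])
      obtain ⟨n, hn⟩ := exists_nat_gt (π / min x (π - x))
      have hkey : A n < min x (π - x) := by
        rw [hAdef, div_lt_iff₀ (by positivity)]
        have h1 : π < min x (π - x) * n := by
          have := (div_lt_iff₀ hm).1 hn
          linarith [mul_comm ((n:ℝ)) (min x (π - x))]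
        nlinarith [hm.le, Nat.cast_nonneg (α := ℝ) n]
      refine Set.mem_iUnion.2 ⟨n, ?_, ?_⟩
      · exact lt_of_lt_of_le hkey (min_le_left _ _)
      · have := lt_of_lt_of_le hkey (min_le_right _ _)
        linarith
  -- limit 1
  have hLim1 : Filter.Tendsto (fun n => ∫ x in S n, I x) Filter.atTop
      (nhds (∫ x in Set.Ioo 0 π, I x)) := by
    have := MeasureTheory.tendsto_setIntegral_of_monotone hSmeas hSmono
      (by rw [hSunion]; exact hIint)
    rwa [hSunion] at this
  -- value on S n
  have hval : ∀ n : ℕ, (∫ x in S n, I x)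
      = ∫ ψ in (0:ℝ)..(2*π),
          (p (π - A n) ψ * Real.sin (π - A n) - p (A n) ψ * Real.sin (A n)) := by
    intro n
    rw [hSdef]
    rw [← intervalIntegral.integral_of_le (hAB n)]
    rw [intervalIntegral.integral_congr
      (g := fun θ => ∫ ψ in (0:ℝ)..(2*π), G (θ, ψ))
      (by
        intro θ hθ
        rw [Set.uIcc_of_le (hAB n)] at hθ
        exact hIeq θ ⟨lt_of_lt_of_le (hApos n) hθ.1,
          lt_of_le_of_lt hθ.2 (by linarith [hApos n])⟩)]
    exact hC (A n) (π - A n) (haMem n) (hbMem n) (hAB n)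
  -- limit 2
  have hLim2 : Filter.Tendsto (fun n => ∫ x in S n, I x) Filter.atTop (nhds 0) := by
    rw [Metric.tendsto_atTop]
    intro ε hε
    have hε' : 0 < ε / (4 * π + 1) := by positivity
    obtain ⟨δ, hδ, hδp⟩ := hpoles (ε / (4 * π + 1)) hε'
    obtain ⟨N, hN⟩ := exists_nat_gt (π / δ)
    refine ⟨N, fun n hn => ?_⟩
    have hAδ : A n < δ := by
      rw [hAdef, div_lt_iff₀ (by positivity)]
      have h1 : π < δ * N := by
        have := (div_lt_iff₀ hδ).1 hN
        linarith [mul_comm ((N:ℝ)) δ]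
      have h2 : (N : ℝ) ≤ (n : ℝ) := Nat.cast_le.2 hn
      nlinarith [hδ.le]
    rw [Real.dist_eq, sub_zero, hval n]
    have hbound : ∀ ψ ∈ Set.uIoc (0:ℝ) (2*π),
        ‖p (π - A n) ψ * Real.sin (π - A n) - p (A n) ψ * Real.sin (A n)‖
          ≤ 2 * (ε / (4 * π + 1)) := by
      intro ψ _
      have h1 := hδp (π - A n) (hbMem n) ψ (Or.inr (by simpa using hAδ))
      have h2 := hδp (A n) (haMem n) ψ (Or.inl hAδ)
      calc ‖p (π - A n) ψ * Real.sin (π - A n) - p (A n) ψ * Real.sin (A n)‖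
          ≤ |p (π - A n) ψ * Real.sin (π - A n)| + |p (A n) ψ * Real.sin (A n)| :=
            norm_sub_le _ _
        _ ≤ 2 * (ε / (4 * π + 1)) := by linarith
    have := intervalIntegral.norm_integral_le_of_norm_le_const hbound
    have habs : |2 * π - 0| = 2 * π := by rw [sub_zero]; exact abs_of_pos h2pi
    rw [habs] at this
    have hmul : ε / (4 * π + 1) * (4 * π + 1) = ε := div_mul_cancel₀ ε (by positivity)
    calc |∫ ψ in (0:ℝ)..(2*π),
            (p (π - A n) ψ * Real.sin (π - A n) - p (A n) ψ * Real.sin (A n))|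
        ≤ 2 * (ε / (4 * π + 1)) * (2 * π) := this
      _ < ε := by nlinarith [hε']
  have hIoo : (∫ x in Set.Ioo 0 π, I x) = 0 := tendsto_nhds_unique hLim1 hLim2
  show (∫ θ in (0:ℝ)..π, I θ) = 0
  rw [intervalIntegral.integral_of_le pi_pos.le, MeasureTheory.integral_Ioc_eq_integral_Ioo]
  exact hIoo
end

section
/- Let λ > 0, T₀ > 0, ε ∈ ℝ. Then lim_{r→∞} (sinh²(T₀/λ)/(16π)) ∫₀^{π} ∫₀^{2π} (16ε/λ²) tanh(T₀/(2λ)) e^{-2r/λ} λ² sinh²(r/λ) sin θ dψ dθ = ε tanh(T₀/(2λ)) sinh²(T₀/λ); in particular, this limit is negative whenever ε < 0. -/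
open MeasureTheory Real Filter intervalIntegral

/-- **The Liang–Zhang negative-energy computation in hyperbolic coordinates.** The total
energy integral of the graph `T = T₀ + ε e^{-3r/λ}` in de Sitter spacetime converges to
`ε tanh(T₀/(2λ)) sinh²(T₀/λ)`, which is negative whenever `ε < 0`. -/
theorem liang_zhang_hyperbolic_energy (lam T₀ ε : ℝ) (hlam : 0 < lam) (hT₀ : 0 < T₀) :
    Tendsto (fun r : ℝ =>
        (Real.sinh (T₀ / lam) ^ 2 / (16 * π)) *
          ∫ θ in (0:ℝ)..π, ∫ ψ in (0:ℝ)..(2 * π),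
            (16 * ε / lam ^ 2) * Real.tanh (T₀ / (2 * lam)) * Real.exp (-2 * r / lam)
              * lam ^ 2 * Real.sinh (r / lam) ^ 2 * Real.sin θ)
      atTop (nhds (ε * Real.tanh (T₀ / (2 * lam)) * Real.sinh (T₀ / lam) ^ 2)) ∧
    (ε < 0 → ε * Real.tanh (T₀ / (2 * lam)) * Real.sinh (T₀ / lam) ^ 2 < 0) := by
  constructor
  · have hl : lam ≠ 0 := ne_of_gt hlam
    have hπ : (π : ℝ) ≠ 0 := Real.pi_ne_zero
    have hfun : ∀ r : ℝ,
        (Real.sinh (T₀ / lam) ^ 2 / (16 * π)) *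
          ∫ θ in (0:ℝ)..π, ∫ ψ in (0:ℝ)..(2 * π),
            (16 * ε / lam ^ 2) * Real.tanh (T₀ / (2 * lam)) * Real.exp (-2 * r / lam)
              * lam ^ 2 * Real.sinh (r / lam) ^ 2 * Real.sin θ
        = (ε * Real.tanh (T₀ / (2 * lam)) * Real.sinh (T₀ / lam) ^ 2) *
            (4 * ((1 - Real.exp (-2 * (r / lam))) / 2) ^ 2) := by
      intro r
      have h1 : ∀ θ : ℝ, (∫ ψ in (0:ℝ)..(2 * π),
            (16 * ε / lam ^ 2) * Real.tanh (T₀ / (2 * lam)) * Real.exp (-2 * r / lam)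
              * lam ^ 2 * Real.sinh (r / lam) ^ 2 * Real.sin θ)
          = (2 * π) * ((16 * ε / lam ^ 2) * Real.tanh (T₀ / (2 * lam)) * Real.exp (-2 * r / lam)
              * lam ^ 2 * Real.sinh (r / lam) ^ 2 * Real.sin θ) := by
        intro θ
        rw [intervalIntegral.integral_const]
        simp [smul_eq_mul]
      simp only [h1]
      rw [intervalIntegral.integral_const_mul]
      have h2 : (∫ θ in (0:ℝ)..π, (16 * ε / lam ^ 2) * Real.tanh (T₀ / (2 * lam))
            * Real.exp (-2 * r / lam) * lam ^ 2 * Real.sinh (r / lam) ^ 2 * Real.sin θ)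
          = ((16 * ε / lam ^ 2) * Real.tanh (T₀ / (2 * lam)) * Real.exp (-2 * r / lam)
              * lam ^ 2 * Real.sinh (r / lam) ^ 2) * 2 := by
        rw [intervalIntegral.integral_const_mul, integral_sin]
        norm_num
      rw [h2]
      have hE : Real.exp (-(r / lam)) * Real.exp (r / lam) = 1 := by
        rw [← Real.exp_add]; simp
      have e2 : Real.exp (-2 * r / lam) = Real.exp (-(r / lam)) * Real.exp (-(r / lam)) := by
        rw [← Real.exp_add]; congr 1; ring
      have e2' : Real.exp (-2 * (r / lam)) = Real.exp (-(r / lam)) * Real.exp (-(r / lam)) := by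
        rw [← Real.exp_add]; congr 1; ring
      rw [e2, e2', Real.sinh_eq (r / lam)]
      set E := Real.exp (-(r / lam)) with hEdef
      set F := Real.exp (r / lam) with hFdef
      set tt := Real.tanh (T₀ / (2 * lam)) with htt
      set ss := Real.sinh (T₀ / lam) with hss
      field_simp
      linear_combination (4 * ε * tt * ss ^ 2
        * (E * F + 1 - 2 * E ^ 2)) * hE
    simp only [hfun]
    have hb : Tendsto (fun r : ℝ => Real.exp (-(r / lam))) atTop (nhds 0) :=
      Real.tendsto_exp_atBot.comp (tendsto_neg_atTop_atBot.comp (tendsto_id.atTop_div_const hlam))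
    have h0 : Tendsto (fun r : ℝ => Real.exp (-2 * (r / lam))) atTop (nhds 0) := by
      have h := hb.mul hb
      rw [mul_zero] at h
      exact h.congr fun r => by
        rw [← Real.exp_add, show -(r / lam) + -(r / lam) = -2 * (r / lam) from by ring]
    have hlim : Tendsto (fun r : ℝ => 4 * ((1 - Real.exp (-2 * (r / lam))) / 2) ^ 2)
        atTop (nhds 1) := by
      have h := ((((tendsto_const_nhds (x := (1:ℝ)) (f := atTop)).sub h0).div_const 2).pow 2).const_mul 4
      have h4 : (4:ℝ) * (((1:ℝ) - 0) / 2) ^ 2 = 1 := by norm_num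
      rwa [h4] at h
    have := (tendsto_const_nhds : Tendsto (fun _ : ℝ =>
        ε * Real.tanh (T₀ / (2 * lam)) * Real.sinh (T₀ / lam) ^ 2) atTop _).mul hlim
    simpa using this
  · intro hε
    have h1 : 0 < Real.tanh (T₀ / (2 * lam)) := by
      have hx : 0 < T₀ / (2 * lam) := div_pos hT₀ (by linarith)
      rw [Real.tanh_eq_sinh_div_cosh]
      exact div_pos (Real.sinh_pos_iff.2 hx) (Real.cosh_pos _)
    have h2 : 0 < Real.sinh (T₀ / lam) ^ 2 := by
      have : 0 < Real.sinh (T₀ / lam) := Real.sinh_pos_iff.2 (div_pos hT₀ hlam)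
      positivity
    exact mul_neg_of_neg_of_pos (mul_neg_of_neg_of_pos hε h1) h2
end
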